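/- arXiv:1708.00823 — 2 statements merged into one kernel-verified Lean document; each statement's English description precedes it below -/
import Mathlib

section
/- Suppose w : [0,T] → ℝ^d is (ρ,γ)-irregular with norm ‖Φ^w‖_{ρ,γ} := sup_{a ∈ ℝ^d} sup_{0 ≤ s < t ≤ T} (1+|a|)^ρ |∫_s^t exp(i⟨a,w_r⟩) dr| / (t-s)^γ < ∞. Then for every κ ∈ (0,1), w is (ρκ, 1 - κ(1-γ))-irregular and moreover ‖Φ^w‖_{ρκ, 1-κ(1-γ)} ≤ 2^{1-κ} ‖Φ^w‖_{ρ,γ}^κ. -/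
open MeasureTheory Real

/-! Interpolate the irregularity bound `(1 + |a|)^ρ |∫_s^t e^{i⟨a, w_r⟩} dr| ≤ M (t - s)^γ`
with the trivial bound `|∫_s^t e^{i⟨a, w_r⟩} dr| ≤ t - s`, using the weights `κ` and `1 - κ`. -/

lemma norm_intervalIntegral_exp_mul_I_le (f : ℝ → ℝ) {s t : ℝ} (hst : s ≤ t) :
    ‖∫ r in s..t, Complex.exp (f r * Complex.I)‖ ≤ t - s := by
  have h := intervalIntegral.norm_integral_le_of_norm_le_const (C := 1)
    (f := fun r => Complex.exp (f r * Complex.I)) (a := s) (b := t)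
    fun r _ => (Complex.norm_exp_ofReal_mul_I (f r)).le
  rwa [one_mul, abs_of_nonneg (sub_nonneg.mpr hst)] at h

lemma rpow_mul_le_rpow_mul_rpow_of_mul_le {A I B C κ : ℝ} (hA : 0 ≤ A) (hI : 0 ≤ I)
    (hAI : A * I ≤ B) (hIC : I ≤ C) (hκ₀ : 0 ≤ κ) (hκ₁ : κ ≤ 1) :
    A ^ κ * I ≤ B ^ κ * C ^ (1 - κ) := by
  have hB : 0 ≤ B := (mul_nonneg hA hI).trans hAI
  calc A ^ κ * I = (A * I) ^ κ * I ^ (1 - κ) := by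
        rw [mul_rpow hA hI, mul_assoc, ← rpow_add' hI (by norm_num), add_sub_cancel, rpow_one]
    _ ≤ B ^ κ * C ^ (1 - κ) :=
        mul_le_mul (rpow_le_rpow (mul_nonneg hA hI) hAI hκ₀)
          (rpow_le_rpow hI hIC (sub_nonneg.mpr hκ₁)) (by positivity) (rpow_nonneg hB κ)

lemma mul_rpow_rpow_mul_rpow_one_sub {M h γ κ : ℝ} (hM : 0 ≤ M) (hh : 0 < h) :
    (M * h ^ γ) ^ κ * h ^ (1 - κ) = M ^ κ * h ^ (1 - κ * (1 - γ)) := by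
  rw [mul_rpow hM (rpow_nonneg hh.le γ), ← rpow_mul hh.le, mul_assoc, ← rpow_add hh]
  ring_nf

theorem stmt_1_general (T : ℝ) (d : ℕ) (ρ γ : ℝ)
    (w : ℝ → EuclideanSpace ℝ (Fin d))
    (M : ℝ) (hM : 0 ≤ M)
    (hirr : ∀ (a : EuclideanSpace ℝ (Fin d)) (s t : ℝ), 0 ≤ s → s < t → t ≤ T →
      (1 + ‖a‖) ^ ρ * ‖∫ r in s..t, Complex.exp ((inner ℝ a (w r) : ℝ) * Complex.I)‖
        ≤ M * (t - s) ^ γ)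
    (κ : ℝ) (hκ : κ ∈ Set.Ioo (0:ℝ) 1) :
    ∀ (a : EuclideanSpace ℝ (Fin d)) (s t : ℝ), 0 ≤ s → s < t → t ≤ T →
      (1 + ‖a‖) ^ (ρ * κ) * ‖∫ r in s..t, Complex.exp ((inner ℝ a (w r) : ℝ) * Complex.I)‖
        ≤ 2 ^ (1 - κ) * M ^ κ * (t - s) ^ (1 - κ * (1 - γ)) := by
  intro a s t hs hst htT
  have ha : 0 ≤ 1 + ‖a‖ := by positivity
  have hts : 0 < t - s := sub_pos.mpr hst
  calc (1 + ‖a‖) ^ (ρ * κ) * ‖∫ r in s..t, Complex.exp ((inner ℝ a (w r) : ℝ) * Complex.I)‖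
      ≤ (M * (t - s) ^ γ) ^ κ * (t - s) ^ (1 - κ) := by
        rw [rpow_mul ha]
        exact rpow_mul_le_rpow_mul_rpow_of_mul_le (rpow_nonneg ha ρ) (norm_nonneg _)
          (hirr a s t hs hst htT) (norm_intervalIntegral_exp_mul_I_le _ hst.le) hκ.1.le hκ.2.le
    _ = M ^ κ * (t - s) ^ (1 - κ * (1 - γ)) := mul_rpow_rpow_mul_rpow_one_sub hM hts
    _ ≤ 2 ^ (1 - κ) * M ^ κ * (t - s) ^ (1 - κ * (1 - γ)) := by
        rw [mul_assoc]
        exact le_mul_of_one_le_left (by positivity) (one_le_rpow one_le_two (by linarith [hκ.2]))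

/-- Interpolation of `(ρ,γ)`-irregularity: a `(ρ,γ)`-irregular path is
`(ρκ, 1-κ(1-γ))`-irregular with norm at most `2^(1-κ) M^κ`. -/
theorem stmt_1 (T : ℝ) (hT : 0 < T) (d : ℕ) (hd : 1 ≤ d) (ρ γ : ℝ) (hρ : 0 < ρ) (hγ : 0 < γ)
    (w : ℝ → EuclideanSpace ℝ (Fin d)) (hw : ContinuousOn w (Set.Icc 0 T))
    (M : ℝ) (hM : 0 ≤ M)
    (hirr : ∀ (a : EuclideanSpace ℝ (Fin d)) (s t : ℝ), 0 ≤ s → s < t → t ≤ T →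
      (1 + ‖a‖) ^ ρ * ‖∫ r in s..t, Complex.exp ((inner ℝ a (w r) : ℝ) * Complex.I)‖
        ≤ M * (t - s) ^ γ)
    (κ : ℝ) (hκ : κ ∈ Set.Ioo (0:ℝ) 1) :
    ∀ (a : EuclideanSpace ℝ (Fin d)) (s t : ℝ), 0 ≤ s → s < t → t ≤ T →
      (1 + ‖a‖) ^ (ρ * κ) * ‖∫ r in s..t, Complex.exp ((inner ℝ a (w r) : ℝ) * Complex.I)‖
        ≤ 2 ^ (1 - κ) * M ^ κ * (t - s) ^ (1 - κ * (1 - γ)) :=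
  stmt_1_general T d ρ γ w M hM hirr κ hκ
end

section
/- Let w : [0,T] → ℝ^d be (ρ,γ)-irregular with constant M = ‖Φ^w‖_{ρ,γ}, let s ∈ [0,T], a ∈ ℝ^d, b ≥ 1, and define Ψ(a,b) = ∫_0^{T-s} exp(i⟨a, w_{r+s} - w_s⟩ - 2br) dr. Then for every θ with γ < θ < γ + 1 there is a constant C (depending on θ, γ, T) such that |Ψ(a,b)| ≤ C M b^{1-θ} / (1 + |a|^ρ). -/
open MeasureTheory Real Set

/-!
Put `f r = exp (i⟨a, w (r + s) - w s⟩)`, `F t = ∫₀ᵗ f` and `β = 2b`. Irregularity of `w` gives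
`‖F t‖ ≤ M t^γ / (1 + ‖a‖)^ρ`. Integrating by parts against `e^{-βr}`,
`Ψ = F L e^{-βL} + β ∫₀ᴸ F t e^{-βt} dt`; the boundary term is controlled by `x^γ e^{-x} ≤ γ^γ`
and the integral term by Euler's integral `∫₀^∞ t^γ e^{-βt} dt = Γ(γ + 1) β^{-γ-1}`. Both are
`O(b^{-γ})`, and `b^{-γ} ≤ b^{1-θ}` because `θ < γ + 1` and `b ≥ 1`.
-/

theorem rpow_mul_exp_neg_le_rpow_self {q x : ℝ} (hq : 0 < q) (hx : 0 ≤ x) :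
    x ^ q * exp (-x) ≤ q ^ q := by
  have hlin : x ≤ q * exp (x / q) := by
    have := add_one_le_exp (x / q)
    calc x = q * (x / q) := by field_simp
      _ ≤ q * exp (x / q) := by gcongr; linarith
  calc x ^ q * exp (-x) ≤ (q * exp (x / q)) ^ q * exp (-x) := by gcongr
    _ = q ^ q := by
      rw [mul_rpow hq.le (exp_pos _).le, ← exp_mul, div_mul_cancel₀ _ hq.ne', mul_assoc,
        ← exp_add, add_neg_cancel, exp_zero, mul_one]

theorem rpow_mul_exp_neg_mul_le {q β t : ℝ} (hq : 0 < q) (hβ : 0 < β) (ht : 0 ≤ t) :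
    t ^ q * exp (-(β * t)) ≤ q ^ q * β ^ (-q) := by
  have h := rpow_mul_exp_neg_le_rpow_self hq (mul_nonneg hβ.le ht)
  rw [mul_rpow hβ.le ht] at h
  rw [rpow_neg hβ.le, ← div_eq_mul_inv, le_div_iff₀ (rpow_pos_of_pos hβ q)]
  linarith

theorem intervalIntegral_rpow_mul_exp_neg_mul_le {q β L : ℝ} (hq : -1 < q) (hβ : 0 < β)
    (hL : 0 ≤ L) :
    ∫ t in 0..L, t ^ q * exp (-(β * t)) ≤ Gamma (q + 1) * β ^ (-(q + 1)) := by
  have hint : IntegrableOn (fun t => t ^ q * exp (-(β * t))) (Ioi 0) := by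
    simpa only [rpow_one, neg_mul] using integrableOn_rpow_mul_exp_neg_mul_rpow hq one_pos hβ
  have hnonneg : 0 ≤ᵐ[volume.restrict (Ioi 0)] fun t => t ^ q * exp (-(β * t)) :=
    (ae_restrict_iff' measurableSet_Ioi).mpr <| .of_forall fun t ht =>
      mul_nonneg (rpow_nonneg (le_of_lt ht) q) (exp_pos _).le
  have hGamma := integral_rpow_mul_exp_neg_mul_Ioi (a := q + 1) (by linarith) hβ
  rw [add_sub_cancel_right, one_div, inv_rpow hβ.le, ← rpow_neg hβ.le, mul_comm] at hGamma
  rw [intervalIntegral.integral_of_le hL, ← hGamma]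
  exact setIntegral_mono_set hint hnonneg Ioc_subset_Ioi_self.eventuallyLE

theorem hasDerivWithinAt_integral_Icc {E : Type*} [NormedAddCommGroup E] [NormedSpace ℝ E]
    [CompleteSpace E] {f : ℝ → E} {a b t : ℝ} (hf : ContinuousOn f (Icc a b))
    (ht : t ∈ Icc a b) :
    HasDerivWithinAt (fun u => ∫ x in a..u, f x) (f t) (Icc a b) t := by
  have := Fact.mk ht -- the `FTCFilter` instance for `𝓝[Icc a b] t` is found through this
  exact intervalIntegral.integral_hasDerivWithinAt_right
    ((hf.mono (Icc_subset_Icc le_rfl ht.2)).intervalIntegrable_of_Icc ht.1)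
    (hf.stronglyMeasurableAtFilter_nhdsWithin measurableSet_Icc t) (hf.continuousWithinAt ht)

theorem integral_exp_neg_mul_mul_eq {f : ℝ → ℂ} {β L : ℝ} (hL : 0 ≤ L)
    (hf : ContinuousOn f (Icc 0 L)) :
    ∫ r in 0..L, (exp (-(β * r)) : ℂ) * f r =
      exp (-(β * L)) * (∫ r in 0..L, f r) +
        β * ∫ t in 0..L, (exp (-(β * t)) : ℂ) * ∫ r in 0..t, f r := by
  have hI : uIcc 0 L = Icc 0 L := uIcc_of_le hL
  have hexp : ∀ t ∈ uIcc 0 L, HasDerivWithinAt (fun t => (exp (-(β * t)) : ℂ))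
      ((-β * exp (-(β * t)) : ℝ) : ℂ) (uIcc 0 L) t := fun t _ => by
    have hlin : HasDerivAt (fun t => -(β * t)) (-β) t := by
      simpa using ((hasDerivAt_id' t).const_mul β).fun_neg
    exact (mul_comm (exp _) (-β) ▸ hlin.exp).ofReal_comp.hasDerivWithinAt
  rw [intervalIntegral.integral_mul_deriv_eq_deriv_mul_of_hasDerivWithinAt hexp
    (fun t ht => by rw [hI] at ht ⊢; exact hasDerivWithinAt_integral_Icc hf ht)
    (by apply Continuous.intervalIntegrable; fun_prop) ((hI ▸ hf).intervalIntegrable)]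
  simp only [intervalIntegral.integral_same, mul_zero, sub_zero, Complex.ofReal_mul,
    Complex.ofReal_neg, neg_mul, mul_assoc, intervalIntegral.integral_neg,
    intervalIntegral.integral_const_mul, sub_neg_eq_add]

theorem norm_integral_exp_neg_mul_mul_le {f : ℝ → ℂ} {β γ K L : ℝ} (hL : 0 ≤ L) (hβ : 0 < β)
    (hγ : 0 < γ) (hK : 0 ≤ K) (hf : ContinuousOn f (Icc 0 L))
    (hF : ∀ t ∈ Icc 0 L, ‖∫ r in 0..t, f r‖ ≤ K * t ^ γ) :
    ‖∫ r in 0..L, (exp (-(β * r)) : ℂ) * f r‖ ≤ (γ ^ γ + Gamma (γ + 1)) * K * β ^ (-γ) := by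
  have hboundary : ‖(exp (-(β * L)) : ℂ) * ∫ r in 0..L, f r‖ ≤ γ ^ γ * K * β ^ (-γ) := by
    rw [norm_mul, Complex.norm_real, norm_of_nonneg (exp_pos _).le]
    calc exp (-(β * L)) * ‖∫ r in 0..L, f r‖ ≤ exp (-(β * L)) * (K * L ^ γ) := by
          gcongr; exact hF L ⟨hL, le_rfl⟩
      _ = K * (L ^ γ * exp (-(β * L))) := by ring
      _ ≤ K * (γ ^ γ * β ^ (-γ)) := mul_le_mul_of_nonneg_left (rpow_mul_exp_neg_mul_le hγ hβ hL) hK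
      _ = γ ^ γ * K * β ^ (-γ) := by ring
  have hbulk : ‖(β : ℂ) * ∫ t in 0..L, (exp (-(β * t)) : ℂ) * ∫ r in 0..t, f r‖ ≤
      Gamma (γ + 1) * K * β ^ (-γ) := by
    rw [norm_mul, Complex.norm_real, norm_of_nonneg hβ.le]
    calc β * ‖∫ t in 0..L, (exp (-(β * t)) : ℂ) * ∫ r in 0..t, f r‖
        ≤ β * ∫ t in 0..L, K * (t ^ γ * exp (-(β * t))) := by
          gcongr
          refine intervalIntegral.norm_integral_le_of_norm_le hL (.of_forall fun t ht => ?_)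
            (by apply Continuous.intervalIntegrable; fun_prop (disch := positivity))
          rw [norm_mul, Complex.norm_real, norm_of_nonneg (exp_pos _).le]
          nlinarith [hF t (Ioc_subset_Icc_self ht), exp_pos (-(β * t))]
      _ ≤ β * (K * (Gamma (γ + 1) * β ^ (-(γ + 1)))) := by
          rw [intervalIntegral.integral_const_mul]
          gcongr
          exact intervalIntegral_rpow_mul_exp_neg_mul_le (by linarith) hβ hL
      _ = Gamma (γ + 1) * K * β ^ (-γ) := by
          rw [show -γ = 1 + -(γ + 1) by ring, rpow_add hβ, rpow_one]
          ring
  rw [integral_exp_neg_mul_mul_eq hL hf]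
  calc _ ≤ _ := norm_add_le _ _
    _ ≤ γ ^ γ * K * β ^ (-γ) + Gamma (γ + 1) * K * β ^ (-γ) := add_le_add hboundary hbulk
    _ = (γ ^ γ + Gamma (γ + 1)) * K * β ^ (-γ) := by ring

theorem norm_integral_exp_inner_sub_eq {E : Type*} [NormedAddCommGroup E] [InnerProductSpace ℝ E]
    (w : ℝ → E) (a : E) (s t : ℝ) :
    ‖∫ r in 0..t, Complex.exp ((inner ℝ a (w (r + s) - w s) : ℝ) * Complex.I)‖ =
      ‖∫ r in s..s + t, Complex.exp ((inner ℝ a (w r) : ℝ) * Complex.I)‖ := by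
  have hsplit : ∀ r, Complex.exp ((inner ℝ a (w (r + s) - w s) : ℝ) * Complex.I) =
      Complex.exp ((inner ℝ a (w (r + s)) : ℝ) * Complex.I) *
        Complex.exp ((-inner ℝ a (w s) : ℝ) * Complex.I) := fun r => by
    rw [inner_sub_right, ← Complex.exp_add]
    congr 1
    push_cast
    ring
  simp_rw [hsplit, intervalIntegral.integral_mul_const, norm_mul, Complex.norm_exp_ofReal_mul_I,
    mul_one]
  rw [intervalIntegral.integral_comp_add_right
    (fun r => Complex.exp ((inner ℝ a (w r) : ℝ) * Complex.I)), zero_add, add_comm]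

theorem norm_integral_exp_inner_sub_le {E : Type*} [NormedAddCommGroup E]
    [InnerProductSpace ℝ E] {w : ℝ → E} {a : E} {T ρ γ M s t : ℝ} (hγ : 0 < γ)
    (hirr : ∀ s t : ℝ, 0 ≤ s → s < t → t ≤ T →
      (1 + ‖a‖) ^ ρ * ‖∫ r in s..t, Complex.exp ((inner ℝ a (w r) : ℝ) * Complex.I)‖
        ≤ M * (t - s) ^ γ)
    (hs : 0 ≤ s) (ht : t ∈ Icc 0 (T - s)) :
    ‖∫ r in 0..t, Complex.exp ((inner ℝ a (w (r + s) - w s) : ℝ) * Complex.I)‖ ≤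
      M / (1 + ‖a‖) ^ ρ * t ^ γ := by
  rcases ht.1.eq_or_lt with rfl | ht0
  · simp [zero_rpow hγ.ne']
  rw [norm_integral_exp_inner_sub_eq, div_mul_eq_mul_div, le_div_iff₀ (by positivity), mul_comm]
  simpa using hirr s (s + t) hs (by linarith) (by linarith [ht.2])

theorem one_add_rpow_le_two_mul_one_add_rpow {x ρ : ℝ} (hx : 0 ≤ x) (hρ : 0 ≤ ρ) :
    1 + x ^ ρ ≤ 2 * (1 + x) ^ ρ := by
  have h1 : 1 ≤ (1 + x) ^ ρ := one_le_rpow (by linarith) hρ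
  have h2 : x ^ ρ ≤ (1 + x) ^ ρ := rpow_le_rpow hx (by linarith) hρ
  linarith

theorem stmt_6_general (T : ℝ) (d : ℕ) (ρ γ θ : ℝ)
    (hρ : 0 < ρ) (hγ : 0 < γ) (hθ : θ ∈ Set.Ioo γ (γ + 1)) :
    ∃ C : ℝ, 0 < C ∧
      ∀ (w : ℝ → EuclideanSpace ℝ (Fin d)), ContinuousOn w (Set.Icc 0 T) →
      ∀ M : ℝ, 0 ≤ M →
      (∀ (a : EuclideanSpace ℝ (Fin d)) (s t : ℝ), 0 ≤ s → s < t → t ≤ T →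
        (1 + ‖a‖) ^ ρ * ‖∫ r in s..t, Complex.exp ((inner ℝ a (w r) : ℝ) * Complex.I)‖
          ≤ M * (t - s) ^ γ) →
      ∀ s ∈ Set.Icc (0:ℝ) T, ∀ (a : EuclideanSpace ℝ (Fin d)) (b : ℝ), 1 ≤ b →
        ‖∫ r in (0:ℝ)..(T - s),
            Complex.exp ((inner ℝ a (w (r + s) - w s) : ℝ) * Complex.I - 2 * b * r)‖
          ≤ C * M * b ^ (1 - θ) / (1 + ‖a‖ ^ ρ) := by
  refine ⟨2 * (γ ^ γ + Gamma (γ + 1)), by positivity, ?_⟩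
  intro w hw M hM hirr s hs a b hb
  set f : ℝ → ℂ := fun r => Complex.exp ((inner ℝ a (w (r + s) - w s) : ℝ) * Complex.I)
  have hf : ContinuousOn f (Icc 0 (T - s)) := by
    have hshift : MapsTo (· + s) (Icc 0 (T - s)) (Icc 0 T) := fun r hr =>
      ⟨by linarith [hr.1, hs.1], by linarith [hr.2]⟩
    have hws : ContinuousOn (fun r => w (r + s)) (Icc 0 (T - s)) := hw.comp (by fun_prop) hshift
    fun_prop
  have hΨ := norm_integral_exp_neg_mul_mul_le (β := 2 * b) (by linarith [hs.2]) (by positivity)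
    hγ (by positivity) hf fun t => norm_integral_exp_inner_sub_le hγ (hirr a) hs.1
  have hintegrand : ∀ r : ℝ, Complex.exp ((inner ℝ a (w (r + s) - w s) : ℝ) * Complex.I - 2 * b * r)
      = (exp (-(2 * b * r)) : ℂ) * f r := fun r => by
    rw [Complex.ofReal_exp, ← Complex.exp_add]
    congr 1
    push_cast
    ring
  have hdecay : (2 * b) ^ (-γ) ≤ b ^ (1 - θ) :=
    (rpow_le_rpow_of_nonpos (by positivity) (by linarith) (by linarith)).trans
      (rpow_le_rpow_of_exponent_le hb (by linarith [hθ.2]))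
  have hweight : M / (1 + ‖a‖) ^ ρ ≤ 2 * M / (1 + ‖a‖ ^ ρ) := by
    rw [div_le_div_iff₀ (by positivity) (by positivity)]
    nlinarith [one_add_rpow_le_two_mul_one_add_rpow (norm_nonneg a) hρ.le]
  simp_rw [hintegrand]
  calc _ ≤ (γ ^ γ + Gamma (γ + 1)) * (M / (1 + ‖a‖) ^ ρ) * (2 * b) ^ (-γ) := hΨ
    _ ≤ (γ ^ γ + Gamma (γ + 1)) * (2 * M / (1 + ‖a‖ ^ ρ)) * b ^ (1 - θ) := by gcongr
    _ = _ := by ring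

/-- Decay of the damped oscillating integral `Ψ` for a `(ρ,γ)`-irregular path. -/
theorem stmt_6 (T : ℝ) (hT : 0 < T) (d : ℕ) (hd : 1 ≤ d) (ρ γ θ : ℝ)
    (hρ : 0 < ρ) (hγ : 0 < γ) (hθ : θ ∈ Set.Ioo γ (γ + 1)) :
    ∃ C : ℝ, 0 < C ∧
      ∀ (w : ℝ → EuclideanSpace ℝ (Fin d)), ContinuousOn w (Set.Icc 0 T) →
      ∀ M : ℝ, 0 ≤ M →
      (∀ (a : EuclideanSpace ℝ (Fin d)) (s t : ℝ), 0 ≤ s → s < t → t ≤ T →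
        (1 + ‖a‖) ^ ρ * ‖∫ r in s..t, Complex.exp ((inner ℝ a (w r) : ℝ) * Complex.I)‖
          ≤ M * (t - s) ^ γ) →
      ∀ s ∈ Set.Icc (0:ℝ) T, ∀ (a : EuclideanSpace ℝ (Fin d)) (b : ℝ), 1 ≤ b →
        ‖∫ r in (0:ℝ)..(T - s),
            Complex.exp ((inner ℝ a (w (r + s) - w s) : ℝ) * Complex.I - 2 * b * r)‖
          ≤ C * M * b ^ (1 - θ) / (1 + ‖a‖ ^ ρ) :=
  stmt_6_general T d ρ γ θ hρ hγ hθ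
end
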